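/- Let X, Y be Polish spaces, c continuous and bounded, μ ∈ P(X), ν ∈ P(Y). Suppose π ∈ Π(μ,ν) satisfies c(x,y) = inf_{x' ∈ supp(μ)} c(x',y) for all (x,y) ∈ supp(π). Then the function f ≡ 0 on supp(μ) has double conjugate f^{cc} (taken with respect to supp(μ) and supp(ν)) which is a trivial Kantorovich potential: f^{cc} ∈ S_c(μ,ν) and f^{cc} = 0 μ-almost surely. -/

import Mathlib

open MeasureTheory
open scoped ENNReal

/-- Topological support of a measure: points all of whose open neighborhoods
have positive measure. -/
def msupport {X : Type*} [TopologicalSpace X] [MeasurableSpace X]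
    (μ : Measure X) : Set X :=
  {x | ∀ U : Set X, IsOpen U → x ∈ U → μ U ≠ 0}

/-- `π` is a coupling of `μ` and `ν`. -/
def IsCoupling {X Y : Type*} [MeasurableSpace X] [MeasurableSpace Y]
    (π : Measure (X × Y)) (μ : Measure X) (ν : Measure Y) : Prop :=
  IsProbabilityMeasure π ∧ π.map Prod.fst = μ ∧ π.map Prod.snd = ν

/-- Optimal transport cost (in `ℝ≥0∞`). -/
noncomputable def OTCost {X Y : Type*} [MeasurableSpace X] [MeasurableSpace Y]
    (c : X → Y → ℝ) (μ : Measure X) (ν : Measure Y) : ℝ≥0∞ :=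
  ⨅ (π : Measure (X × Y)) (_ : IsCoupling π μ ν),
    ∫⁻ p, ENNReal.ofReal (c p.1 p.2) ∂π

/-- Optimal transport cost (real-valued, for bounded costs). -/
noncomputable def OTr {X Y : Type*} [MeasurableSpace X] [MeasurableSpace Y]
    (c : X → Y → ℝ) (μ : Measure X) (ν : Measure Y) : ℝ :=
  sInf {r : ℝ | ∃ π : Measure (X × Y), IsCoupling π μ ν ∧ r = ∫ p, c p.1 p.2 ∂π}


/-!
Put `f^c(y) = inf_{x ∈ supp μ} c(x, y)`. Since `f^c(y) ≤ c(x, y)` on `supp μ`, the double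
conjugate satisfies `f^{cc} ≥ 0` there, while on `supp π` the hypothesis says `c(x, y) = f^c(y)`,
so `f^{cc}(x) ≤ c(x, y) - f^c(y) = 0`. Hence `f^{cc}` vanishes on the first projection of
`supp π`, which carries `μ`. By `f^{ccc} = f^c` the pair `(f^{cc}, f^{ccc})` is saturated by
`π`, and a coupling saturating an admissible dual pair is optimal.
-/

open Set Filter Topology

lemma msupport_eq_support {X : Type*} [TopologicalSpace X] [MeasurableSpace X]
    (μ : Measure X) : msupport μ = μ.support := by
  ext x
  simp only [msupport, Measure.support_eq_forall_isOpen, pos_iff_ne_zero, mem_ofPred_eq]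
  exact forall_congr' fun _ => forall_comm

lemma MeasureTheory.Measure.mem_support_map {X Y : Type*} [TopologicalSpace X] [MeasurableSpace X]
    [TopologicalSpace Y] [MeasurableSpace Y] [OpensMeasurableSpace Y] {μ : Measure X}
    {f : X → Y} (hf : Continuous f) (hfm : Measurable f) {x : X} (hx : x ∈ μ.support) :
    f x ∈ (μ.map f).support := by
  rw [Measure.support_eq_forall_isOpen] at hx ⊢
  intro U hxU hU
  rw [Measure.map_apply hfm hU.measurableSet]
  exact hx _ hxU (hU.preimage hf)

/-- The `c`-transform `f^c` relative to `s`; the transform in the other variable is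
`cTransform (flip c)`. -/
noncomputable def cTransform {α β : Type*} (c : α → β → ℝ) (s : Set α) (f : α → ℝ) (y : β) : ℝ :=
  sInf ((fun x => c x y - f x) '' s)

section CTransform

variable {α β : Type*} {c : α → β → ℝ} {s : Set α} {t : Set β} {f : α → ℝ} {C : ℝ}

lemma bddBelow_image_sub (hc0 : ∀ x y, 0 ≤ c x y) (hf : BddAbove (f '' s)) (y : β) :
    BddBelow ((fun x => c x y - f x) '' s) := by
  obtain ⟨M, hM⟩ := hf
  refine ⟨-M, forall_mem_image.2 fun x hx => ?_⟩
  linarith [hc0 x y, hM (mem_image_of_mem f hx)]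

lemma cTransform_le (hc0 : ∀ x y, 0 ≤ c x y) (hf : BddAbove (f '' s)) {x : α} (hx : x ∈ s)
    (y : β) : cTransform c s f y ≤ c x y - f x :=
  csInf_le (bddBelow_image_sub hc0 hf y) (mem_image_of_mem _ hx)

lemma le_cTransform (hs : s.Nonempty) {a : ℝ} {y : β} (h : ∀ x ∈ s, a ≤ c x y - f x) :
    a ≤ cTransform c s f y :=
  le_csInf (hs.image _) (forall_mem_image.2 h)

lemma bddBelow_range_cTransform (hc0 : ∀ x y, 0 ≤ c x y) (hf : BddAbove (f '' s))
    (hs : s.Nonempty) : BddBelow (range (cTransform c s f)) := by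
  obtain ⟨M, hM⟩ := hf
  refine ⟨-M, forall_mem_range.2 fun y => le_cTransform hs fun x hx => ?_⟩
  linarith [hc0 x y, hM (mem_image_of_mem f hx)]

lemma bddAbove_range_cTransform (hc0 : ∀ x y, 0 ≤ c x y) (hcC : ∀ x y, c x y ≤ C)
    (hf : BddAbove (f '' s)) (hs : s.Nonempty) : BddAbove (range (cTransform c s f)) := by
  obtain ⟨x₀, hx₀⟩ := hs
  refine ⟨C - f x₀, forall_mem_range.2 fun y => ?_⟩
  linarith [cTransform_le hc0 hf hx₀ y, hcC x₀ y]

lemma upperSemicontinuous_cTransform [TopologicalSpace β] (hc : ∀ x, Continuous (c x))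
    (hc0 : ∀ x y, 0 ≤ c x y) (hf : BddAbove (f '' s)) :
    UpperSemicontinuous (cTransform c s f) := by
  have h : cTransform c s f = fun y => ⨅ x : s, c x y - f x := by
    ext y
    rw [cTransform, image_eq_range]
    rfl
  rw [h]
  refine upperSemicontinuous_ciInf (fun y => ?_)
    fun x => ((hc x).sub continuous_const).upperSemicontinuous
  rw [← image_eq_range (fun x => c x y - f x)]
  exact bddBelow_image_sub hc0 hf y

lemma integrable_cTransform [TopologicalSpace β] [MeasurableSpace β] [OpensMeasurableSpace β]
    {ν : Measure β} [IsFiniteMeasure ν] (hc : ∀ x, Continuous (c x)) (hc0 : ∀ x y, 0 ≤ c x y)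
    (hcC : ∀ x y, c x y ≤ C) (hf : BddAbove (f '' s)) (hs : s.Nonempty) :
    Integrable (cTransform c s f) ν := by
  obtain ⟨a, ha⟩ := bddBelow_range_cTransform hc0 hf hs
  obtain ⟨b, hb⟩ := bddAbove_range_cTransform hc0 hcC hf hs
  have hmeas := (upperSemicontinuous_cTransform hc hc0 hf).measurable
  refine Integrable.of_bound hmeas.aestronglyMeasurable (max |a| |b|) (ae_of_all _ fun y => ?_)
  rw [Real.norm_eq_abs]
  exact abs_le_max_abs_abs (ha (mem_range_self y)) (hb (mem_range_self y))

lemma le_cTransform_flip_cTransform (hc0 : ∀ x y, 0 ≤ c x y) (hf : BddAbove (f '' s))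
    (ht : t.Nonempty) {x : α} (hx : x ∈ s) :
    f x ≤ cTransform (flip c) t (cTransform c s f) x :=
  le_cTransform ht fun y _ => by
    linarith [cTransform_le hc0 hf hx y, show flip c y x = c x y from rfl]

lemma cTransform_cTransform_flip_cTransform_eqOn (hc0 : ∀ x y, 0 ≤ c x y)
    (hcC : ∀ x y, c x y ≤ C) (hf : BddAbove (f '' s)) (hs : s.Nonempty) (ht : t.Nonempty) :
    EqOn (cTransform c s (cTransform (flip c) t (cTransform c s f))) (cTransform c s f) t := by
  intro y hy
  have hfc : BddAbove (cTransform c s f '' t) :=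
    (bddAbove_range_cTransform hc0 hcC hf hs).mono (image_subset_range _ _)
  have hfcc : BddAbove (cTransform (flip c) t (cTransform c s f) '' s) :=
    (bddAbove_range_cTransform (fun y x => hc0 x y) (fun y x => hcC x y) hfc ht).mono
      (image_subset_range _ _)
  refine le_antisymm (le_cTransform hs fun x hx => ?_) (le_cTransform hs fun x hx => ?_)
  · linarith [cTransform_le hc0 hfcc hx y, le_cTransform_flip_cTransform hc0 hf ht hx]
  · linarith [cTransform_le (c := flip c) (fun y x => hc0 x y) hfc hy x,
      show flip c y x = c x y from rfl]

lemma cTransform_flip_cTransform_zero_eq_zero (hc0 : ∀ x y, 0 ≤ c x y)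
    (hcC : ∀ x y, c x y ≤ C) {x : α} {y : β} (hx : x ∈ s) (hy : y ∈ t)
    (hxy : c x y = cTransform c s 0 y) : cTransform (flip c) t (cTransform c s 0) x = 0 := by
  have h0 : BddAbove ((0 : α → ℝ) '' s) := ⟨0, forall_mem_image.2 fun _ _ => le_rfl⟩
  have hfc : BddAbove (cTransform c s 0 '' t) :=
    (bddAbove_range_cTransform hc0 hcC h0 ⟨x, hx⟩).mono (image_subset_range _ _)
  refine le_antisymm ?_ (le_cTransform_flip_cTransform hc0 h0 ⟨y, hy⟩ hx)
  linarith [cTransform_le (c := flip c) (fun y x => hc0 x y) hfc hy x,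
    show flip c y x = c x y from rfl]

end CTransform

namespace IsCoupling

variable {X Y : Type*} [MeasurableSpace X] [MeasurableSpace Y] {μ : Measure X} {ν : Measure Y}
  {π : Measure (X × Y)} {ψ : X → ℝ} {φ : Y → ℝ}

lemma isProbabilityMeasure_left (hπ : IsCoupling π μ ν) : IsProbabilityMeasure μ :=
  have := hπ.1
  hπ.2.1 ▸ Measure.isProbabilityMeasure_map measurable_fst.aemeasurable

lemma isProbabilityMeasure_right (hπ : IsCoupling π μ ν) : IsProbabilityMeasure ν :=
  have := hπ.1
  hπ.2.2 ▸ Measure.isProbabilityMeasure_map measurable_snd.aemeasurable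

lemma ae_of_ae_fst (hπ : IsCoupling π μ ν) {P : X → Prop} (hP : MeasurableSet {x | P x})
    (h : ∀ᵐ p ∂π, P p.1) : ∀ᵐ x ∂μ, P x := by
  rw [← hπ.2.1]
  exact (ae_map_iff measurable_fst.aemeasurable hP).2 h

lemma integral_fst_add_snd (hπ : IsCoupling π μ ν) (hψ : Integrable ψ μ) (hφ : Integrable φ ν) :
    ∫ p, ψ p.1 + φ p.2 ∂π = ∫ x, ψ x ∂μ + ∫ y, φ y ∂ν := by
  rw [← hπ.2.1] at hψ ⊢
  rw [← hπ.2.2] at hφ ⊢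
  have hψ' : Integrable (fun p : X × Y => ψ p.1) π := hψ.comp_measurable measurable_fst
  have hφ' : Integrable (fun p : X × Y => φ p.2) π := hφ.comp_measurable measurable_snd
  rw [integral_add hψ' hφ', integral_map measurable_fst.aemeasurable hψ.1,
    integral_map measurable_snd.aemeasurable hφ.1]

lemma integral_add_integral_le (hπ : IsCoupling π μ ν) (hψ : Integrable ψ μ)
    (hφ : Integrable φ ν) {c : X → Y → ℝ} (hc : Integrable (fun p => c p.1 p.2) π)
    (hle : ∀ᵐ x ∂μ, ∀ y, ψ x + φ y ≤ c x y) :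
    ∫ x, ψ x ∂μ + ∫ y, φ y ∂ν ≤ ∫ p, c p.1 p.2 ∂π := by
  rw [← hπ.integral_fst_add_snd hψ hφ]
  have hψ' := hπ.2.1 ▸ hψ
  have hφ' := hπ.2.2 ▸ hφ
  refine integral_mono_ae ((hψ'.comp_measurable measurable_fst).add
    (hφ'.comp_measurable measurable_snd)) hc ?_
  have hle' := hπ.2.1 ▸ hle
  filter_upwards [ae_of_ae_map measurable_fst.aemeasurable hle'] with p hp using hp p.2

variable [TopologicalSpace X] [TopologicalSpace Y] {p : X × Y}

lemma fst_mem_support [OpensMeasurableSpace X] (hπ : IsCoupling π μ ν) (hp : p ∈ π.support) :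
    p.1 ∈ μ.support :=
  hπ.2.1 ▸ Measure.mem_support_map continuous_fst measurable_fst hp

lemma snd_mem_support [OpensMeasurableSpace Y] (hπ : IsCoupling π μ ν) (hp : p ∈ π.support) :
    p.2 ∈ ν.support :=
  hπ.2.2 ▸ Measure.mem_support_map continuous_snd measurable_snd hp

end IsCoupling

theorem OTr_eq_integral_add_integral {X Y : Type*} [MeasurableSpace X] [MeasurableSpace Y]
    {c : X → Y → ℝ} {μ : Measure X} {ν : Measure Y} {π : Measure (X × Y)} {ψ : X → ℝ}
    {φ : Y → ℝ} (hc : ∀ π', IsCoupling π' μ ν → Integrable (fun p => c p.1 p.2) π')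
    (hψ : Integrable ψ μ) (hφ : Integrable φ ν) (hle : ∀ᵐ x ∂μ, ∀ y, ψ x + φ y ≤ c x y)
    (hπ : IsCoupling π μ ν) (heq : ∀ᵐ p ∂π, ψ p.1 + φ p.2 = c p.1 p.2) :
    ∫ x, ψ x ∂μ + ∫ y, φ y ∂ν = OTr c μ ν := by
  refine (IsLeast.csInf_eq ⟨?_, ?_⟩).symm
  · exact ⟨π, hπ, by rw [← hπ.integral_fst_add_snd hψ hφ, integral_congr_ae heq]⟩
  · rintro _ ⟨π', hπ', rfl⟩
    exact hπ'.integral_add_integral_le hψ hφ (hc π' hπ') hle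

section ZeroPotential

variable {X Y : Type*} [TopologicalSpace X] [SecondCountableTopology X] [MeasurableSpace X]
  [OpensMeasurableSpace X] [TopologicalSpace Y] [SecondCountableTopology Y] [MeasurableSpace Y]
  [OpensMeasurableSpace Y] {c : X → Y → ℝ} {C : ℝ} {μ : Measure X} {ν : Measure Y}
  {π : Measure (X × Y)}

lemma IsCoupling.cTransform_flip_cTransform_zero_ae_eq_zero (hπ : IsCoupling π μ ν)
    (hc : Continuous fun p : X × Y => c p.1 p.2) (hc0 : ∀ x y, 0 ≤ c x y)
    (hcC : ∀ x y, c x y ≤ C)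
    (hopt : ∀ p ∈ π.support, c p.1 p.2 = cTransform c μ.support 0 p.2) :
    cTransform (flip c) ν.support (cTransform c μ.support 0) =ᵐ[μ] 0 := by
  have := hπ.isProbabilityMeasure_left
  have h0 : BddAbove ((0 : X → ℝ) '' μ.support) := ⟨0, forall_mem_image.2 fun _ _ => le_rfl⟩
  have hfc : BddAbove (cTransform c μ.support 0 '' ν.support) :=
    (bddAbove_range_cTransform hc0 hcC h0 (μ.nonempty_support (NeZero.ne μ))).mono
      (image_subset_range _ _)
  have hmeas := (upperSemicontinuous_cTransform
    (fun y => hc.comp (continuous_id.prodMk continuous_const)) (fun y x => hc0 x y) hfc).measurable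
  refine hπ.ae_of_ae_fst (measurableSet_eq_fun hmeas measurable_const) ?_
  filter_upwards [π.support_mem_ae] with p hp
  exact cTransform_flip_cTransform_zero_eq_zero hc0 hcC (hπ.fst_mem_support hp)
    (hπ.snd_mem_support hp) (hopt p hp)

lemma IsCoupling.integral_cTransform_flip_cTransform_zero_add_integral_eq_OTr
    (hπ : IsCoupling π μ ν) (hc : Continuous fun p : X × Y => c p.1 p.2)
    (hc0 : ∀ x y, 0 ≤ c x y) (hcC : ∀ x y, c x y ≤ C)
    (hopt : ∀ p ∈ π.support, c p.1 p.2 = cTransform c μ.support 0 p.2) :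
    ∫ x, cTransform (flip c) ν.support (cTransform c μ.support 0) x ∂μ +
      ∫ y, cTransform c μ.support (cTransform (flip c) ν.support (cTransform c μ.support 0)) y ∂ν =
      OTr c μ ν := by
  have := hπ.isProbabilityMeasure_left
  have := hπ.isProbabilityMeasure_right
  have hS := μ.nonempty_support (NeZero.ne μ)
  have hT := ν.nonempty_support (NeZero.ne ν)
  have hc0' : ∀ y x, 0 ≤ flip c y x := fun y x => hc0 x y
  have h0 : BddAbove ((0 : X → ℝ) '' μ.support) := ⟨0, forall_mem_image.2 fun _ _ => le_rfl⟩
  have hfc := (bddAbove_range_cTransform hc0 hcC h0 hS).mono (image_subset_range _ ν.support)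
  have hfcc := (bddAbove_range_cTransform hc0' (fun y x => hcC x y) hfc hT).mono
    (image_subset_range _ μ.support)
  refine OTr_eq_integral_add_integral (fun π' hπ' => ?_)
    (integrable_cTransform (fun y => hc.comp (continuous_id.prodMk continuous_const)) hc0'
      (fun y x => hcC x y) hfc hT)
    (integrable_cTransform (fun x => hc.comp (continuous_const.prodMk continuous_id)) hc0 hcC
      hfcc hS) ?_ hπ ?_
  · have := hπ'.1
    refine Integrable.of_bound hc.aestronglyMeasurable C (ae_of_all _ fun p => ?_)
    rw [Real.norm_eq_abs, abs_of_nonneg (hc0 _ _)]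
    exact hcC _ _
  · filter_upwards [μ.support_mem_ae] with x hx y
    linarith [cTransform_le hc0 hfcc hx y]
  · filter_upwards [π.support_mem_ae] with p hp
    rw [cTransform_flip_cTransform_zero_eq_zero hc0 hcC (hπ.fst_mem_support hp)
      (hπ.snd_mem_support hp) (hopt p hp),
      cTransform_cTransform_flip_cTransform_eqOn hc0 hcC h0 hS hT (hπ.snd_mem_support hp),
      hopt p hp, zero_add]

end ZeroPotential

theorem stmt15_general {X Y : Type*}
    [TopologicalSpace X] [PolishSpace X] [MeasurableSpace X] [BorelSpace X]
    [TopologicalSpace Y] [PolishSpace Y] [MeasurableSpace Y] [BorelSpace Y]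
    (c : X → Y → ℝ) (hc : Continuous fun p : X × Y => c p.1 p.2)
    (hc0 : ∀ x y, 0 ≤ c x y) (C : ℝ) (hcC : ∀ x y, c x y ≤ C)
    (μ : Measure X) (ν : Measure Y)
    (π : Measure (X × Y)) (hπ : IsCoupling π μ ν)
    (hproj : ∀ p ∈ msupport π, c p.1 p.2 = sInf ((fun x' => c x' p.2) '' msupport μ))
    (fc : Y → ℝ) (hfc : ∀ y, fc y = sInf ((fun x => c x y) '' msupport μ))
    (fcc : X → ℝ) (hfcc : ∀ x, fcc x = sInf ((fun y => c x y - fc y) '' msupport ν)) :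
    (∫ x, fcc x ∂μ +
        ∫ y, sInf ((fun x => c x y - fcc x) '' msupport μ) ∂ν = OTr c μ ν) ∧
      fcc =ᵐ[μ] fun _ => (0 : ℝ) := by
  simp only [msupport_eq_support] at hproj hfc hfcc ⊢
  obtain rfl : fc = cTransform c μ.support 0 := funext fun y => by simp [hfc, cTransform]
  obtain rfl : fcc = cTransform (flip c) ν.support (cTransform c μ.support 0) := funext hfcc
  have hopt : ∀ p ∈ π.support, c p.1 p.2 = cTransform c μ.support 0 p.2 :=
    fun p hp => (hproj p hp).trans (hfc p.2).symm
  exact ⟨hπ.integral_cTransform_flip_cTransform_zero_add_integral_eq_OTr hc hc0 hcC hopt,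
    hπ.cTransform_flip_cTransform_zero_ae_eq_zero hc hc0 hcC hopt⟩

theorem stmt15 {X Y : Type*} [Nonempty X] [Nonempty Y]
    [TopologicalSpace X] [PolishSpace X] [MeasurableSpace X] [BorelSpace X]
    [TopologicalSpace Y] [PolishSpace Y] [MeasurableSpace Y] [BorelSpace Y]
    (c : X → Y → ℝ) (hc : Continuous fun p : X × Y => c p.1 p.2)
    (hc0 : ∀ x y, 0 ≤ c x y) (C : ℝ) (hcC : ∀ x y, c x y ≤ C)
    (μ : Measure X) (ν : Measure Y)
    [IsProbabilityMeasure μ] [IsProbabilityMeasure ν]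
    (π : Measure (X × Y)) (hπ : IsCoupling π μ ν)
    (hproj : ∀ p ∈ msupport π, c p.1 p.2 = sInf ((fun x' => c x' p.2) '' msupport μ))
    (fc : Y → ℝ) (hfc : ∀ y, fc y = sInf ((fun x => c x y) '' msupport μ))
    (fcc : X → ℝ) (hfcc : ∀ x, fcc x = sInf ((fun y => c x y - fc y) '' msupport ν)) :
    (∫ x, fcc x ∂μ +
        ∫ y, sInf ((fun x => c x y - fcc x) '' msupport μ) ∂ν = OTr c μ ν) ∧
      fcc =ᵐ[μ] fun _ => (0 : ℝ) :=
  stmt15_general c hc hc0 C hcC μ ν π hπ hproj fc hfc fcc hfcc
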